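/- Let β > 0 and μ > 0, and let u : (0,∞) → ℂ be locally W^{1,2} with ∫_0^∞ |u'(ξ)|^2 ξ^β e^{-μξ} dξ < ∞ and ∫_0^∞ |u(ξ)|^2 ξ^{β-1} e^{-μξ} dξ < ∞. Then lim_{ξ→0+} ξ^β |u(ξ)|^2 = 0 and lim_{ξ→∞} ξ^β e^{-μξ} |u(ξ)|^2 = 0. -/

import Mathlib

/-!
Put `h ξ = ξ ^ β * exp (-μ ξ) * ‖u ξ‖ ^ 2`, so that the last hypothesis says that `h ξ / ξ` is
integrable. Since `∫ dξ / ξ` diverges both at `0` and at `∞`, `h` comes below any `ε > 0`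
arbitrarily close to either end. The derivative
`h' = ((β / ξ - μ) ‖u‖ ^ 2 + 2 ⟪u, u'⟫) ξ ^ β exp (-μ ξ)` is bounded by integrable functions
from above on `(0, ∞)`, using `2 ⟪u, u'⟫ ≤ μ ‖u‖ ^ 2 + μ⁻¹ ‖u'‖ ^ 2`, and from below on `(0, 1]`,
using `2 |⟪u, u'⟫| ≤ ‖u‖ ^ 2 + ‖u'‖ ^ 2`. So near `∞` the function `h` cannot grow much after a
point where it is small, near `0` it cannot have been much larger before such a point, and `h`
tends to `0` at both ends.
-/

open MeasureTheory Set Filter Topology Interval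

theorem tendsto_zero_of_frequently_lt_of_le_add_dist {α : Type*} {l : Filter α} {f F : α → ℝ}
    {L : ℝ} (hf : ∀ᶠ x in l, 0 ≤ f x) (hfreq : ∀ ε > 0, ∃ᶠ x in l, f x < ε)
    (hF : Tendsto F l (𝓝 L)) (hosc : ∀ᶠ a in l, ∀ᶠ b in l, f b ≤ f a + dist (F a) (F b)) :
    Tendsto f l (𝓝 0) := by
  refine Metric.tendsto_nhds.2 fun ε hε => ?_
  have hFnear : ∀ᶠ x in l, dist (F x) L < ε / 3 := Metric.tendsto_nhds.1 hF _ (by positivity)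
  obtain ⟨a, hfa, hFa, hosca⟩ :=
    ((hfreq (ε / 3) (by positivity)).and_eventually (hFnear.and hosc)).exists
  filter_upwards [hf, hFnear, hosca] with b hfb hFb hoscb
  have := dist_triangle_right (F a) (F b) L
  rw [Real.dist_eq, sub_zero, abs_of_nonneg hfb]
  linarith

theorem frequently_lt_of_integrableAtFilter_div {l : Filter ℝ} [l.IsMeasurablyGenerated]
    (hinv : ¬ IntegrableAtFilter (·⁻¹) l) (hpos : ∀ᶠ x in l, 0 < x) {f : ℝ → ℝ}
    (hf : IntegrableAtFilter (fun x => f x / x) l) {ε : ℝ} (hε : 0 < ε) :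
    ∃ᶠ x in l, f x < ε := by
  by_contra hcon
  simp only [not_frequently, not_lt] at hcon
  obtain ⟨s, hs, hfs⟩ := hf
  obtain ⟨t, ht, htm, hbound⟩ := (hpos.and hcon).exists_measurable_mem
  refine hinv ⟨s ∩ t, inter_mem hs ht, ?_⟩
  refine ((hfs.mono_set inter_subset_left).const_mul ε⁻¹).mono'
    measurable_inv.aestronglyMeasurable (ae_restrict_of_ae_restrict_of_subset inter_subset_right
      (ae_restrict_of_forall_mem htm fun x hx => ?_))
  obtain ⟨hx, hεx⟩ := hbound x hx
  rw [Real.norm_of_nonneg (inv_nonneg.2 hx.le), mul_div_assoc', le_div_iff₀ hx,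
    inv_mul_cancel₀ hx.ne', le_inv_mul_iff₀ hε, mul_one]
  exact hεx

theorem not_integrableAtFilter_inv_atTop : ¬ IntegrableAtFilter (·⁻¹) (atTop : Filter ℝ) := by
  rintro ⟨s, hs, hint⟩
  obtain ⟨a, ha⟩ := mem_atTop_sets.1 hs
  exact not_integrableOn_Ici_inv (hint.mono_set ha)

theorem not_integrableAtFilter_inv_nhdsGT_zero : ¬ IntegrableAtFilter (·⁻¹) (𝓝[>] (0 : ℝ)) := by
  rintro ⟨s, hs, hint⟩
  obtain ⟨c, hc : 0 < c, hcs⟩ := (mem_nhdsGT_iff_exists_Ioo_subset).1 hs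
  have : IntervalIntegrable (·⁻¹) volume 0 c := by
    rw [intervalIntegrable_iff_integrableOn_Ioo_of_le hc.le]
    exact hint.mono_set hcs
  simp [intervalIntegrable_inv_iff, hc.ne, hc.le] at this

theorem sub_le_integral_of_hasDerivAt_of_le {f f' g : ℝ → ℝ} {a b : ℝ} (hab : a ≤ b)
    (hf : ∀ x ∈ Icc a b, HasDerivAt f (f' x) x) (hg : IntervalIntegrable g volume a b)
    (hle : ∀ x ∈ Ioo a b, f' x ≤ g x) : f b - f a ≤ ∫ x in a..b, g x :=
  intervalIntegral.sub_le_integral_of_hasDeriv_right_of_le hab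
    (fun x hx => (hf x hx).continuousAt.continuousWithinAt)
    (fun x hx => (hf x (Ioo_subset_Icc_self hx)).hasDerivWithinAt)
    ((intervalIntegrable_iff_integrableOn_Icc_of_le hab).1 hg) hle

theorem tendsto_atTop_zero_of_hasDerivAt_le {f f' g : ℝ → ℝ} {c : ℝ}
    (hf0 : ∀ x ∈ Ioi c, 0 ≤ f x) (hfdiv : IntegrableOn (fun x => f x / x) (Ioi c))
    (hf : ∀ x ∈ Ioi c, HasDerivAt f (f' x) x) (hg : IntegrableOn g (Ioi c))
    (hle : ∀ x ∈ Ioi c, f' x ≤ g x) : Tendsto f atTop (𝓝 0) := by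
  have hgI : ∀ a b, c ≤ a → c ≤ b → IntervalIntegrable g volume a b := fun a b ha hb =>
    intervalIntegrable_iff.2 (hg.mono_set fun x hx => (le_min ha hb).trans_lt hx.1)
  refine tendsto_zero_of_frequently_lt_of_le_add_dist (F := fun x => ∫ t in c..x, g t)
    ((eventually_gt_atTop c).mono hf0)
    (fun ε hε => frequently_lt_of_integrableAtFilter_div not_integrableAtFilter_inv_atTop
      (eventually_gt_atTop 0) ⟨Ioi c, Ioi_mem_atTop c, hfdiv⟩ hε)
    (intervalIntegral_tendsto_integral_Ioi c hg tendsto_id) ?_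
  filter_upwards [eventually_gt_atTop c] with a hca
  filter_upwards [eventually_ge_atTop a] with b hab
  have hsub : Icc a b ⊆ Ioi c := fun x hx => hca.trans_le hx.1
  have hftc := sub_le_integral_of_hasDerivAt_of_le hab (fun x hx => hf x (hsub hx))
    (hgI a b hca.le (hca.le.trans hab)) (fun x hx => hle x (hsub (Ioo_subset_Icc_self hx)))
  rw [← intervalIntegral.integral_interval_sub_left (hgI c b le_rfl (hca.le.trans hab))
    (hgI c a le_rfl hca.le)] at hftc
  rw [Real.dist_eq, abs_sub_comm]
  linarith [le_abs_self ((∫ x in c..b, g x) - ∫ x in c..a, g x)]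

theorem tendsto_nhdsGT_zero_of_neg_le_hasDerivAt {f f' g : ℝ → ℝ} {c : ℝ} (hc : 0 < c)
    (hf0 : ∀ x ∈ Ioo 0 c, 0 ≤ f x) (hfdiv : IntegrableOn (fun x => f x / x) (Ioo 0 c))
    (hf : ∀ x ∈ Ioo 0 c, HasDerivAt f (f' x) x) (hg : IntegrableOn g (Ioo 0 c))
    (hle : ∀ x ∈ Ioo 0 c, -g x ≤ f' x) : Tendsto f (𝓝[>] 0) (𝓝 0) := by
  have hIoo : Ioo 0 c ∈ 𝓝[>] (0 : ℝ) := Ioo_mem_nhdsGT hc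
  have hsub : Ioo 0 c ⊆ [[0, c]] := Ioo_subset_Icc_self.trans Icc_subset_uIcc
  have hgab : IntervalIntegrable g volume 0 c :=
    (intervalIntegrable_iff_integrableOn_Ioo_of_le hc.le).2 hg
  have hgI : ∀ a ∈ [[0, c]], ∀ b ∈ [[0, c]], IntervalIntegrable g volume a b :=
    fun a ha b hb => hgab.mono_set (uIcc_subset_uIcc ha hb)
  have hF : Tendsto (fun x => ∫ t in c..x, g t) (𝓝[>] 0) (𝓝 (∫ t in c..0, g t)) :=
    ((intervalIntegral.continuousOn_primitive_interval' hgab right_mem_uIcc) 0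
      left_mem_uIcc).tendsto.mono_left (nhdsWithin_le_of_mem (mem_of_superset hIoo hsub))
  refine tendsto_zero_of_frequently_lt_of_le_add_dist (mem_of_superset hIoo hf0)
    (fun ε hε => frequently_lt_of_integrableAtFilter_div not_integrableAtFilter_inv_nhdsGT_zero
      self_mem_nhdsWithin ⟨Ioo 0 c, hIoo, hfdiv⟩ hε) hF ?_
  filter_upwards [hIoo] with a ha
  filter_upwards [Ioo_mem_nhdsGT ha.1] with b hb
  have hIcc : Icc b a ⊆ Ioo 0 c := Icc_subset_Ioo hb.1 ha.2
  have hftc := sub_le_integral_of_hasDerivAt_of_le hb.2.le (f := fun x => -f x)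
    (fun x hx => (hf x (hIcc hx)).neg) (hgI b (hsub (hIcc (left_mem_Icc.2 hb.2.le)))
      a (hsub ha)) (fun x hx => neg_le.1 (hle x (hIcc (Ioo_subset_Icc_self hx))))
  rw [← intervalIntegral.integral_interval_sub_left (hgI c right_mem_uIcc a (hsub ha))
    (hgI c right_mem_uIcc b (hsub (hIcc (left_mem_Icc.2 hb.2.le))))] at hftc
  rw [Real.dist_eq]
  linarith [le_abs_self ((∫ x in c..a, g x) - ∫ x in c..b, g x)]

section WeightedNormSq

variable {E : Type*} [NormedAddCommGroup E] [InnerProductSpace ℝ E] {β μ ξ : ℝ} {u : ℝ → E}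
  {v : E}

theorem hasDerivAt_rpow_mul_exp_mul_norm_sq (hξ : 0 < ξ) (hu : HasDerivAt u v ξ) :
    HasDerivAt (fun x => x ^ β * Real.exp (-μ * x) * ‖u x‖ ^ 2)
      (((β * ξ ^ (β - 1) - μ * ξ ^ β) * ‖u ξ‖ ^ 2 + ξ ^ β * (2 * inner ℝ (u ξ) v))
        * Real.exp (-μ * ξ)) ξ := by
  have hexp : HasDerivAt (fun x => Real.exp (-μ * x)) (Real.exp (-μ * ξ) * -μ) ξ :=
    ((hasDerivAt_id ξ).const_mul (-μ)).exp.congr_deriv (by simp)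
  refine (((Real.hasDerivAt_rpow_const (p := β) (Or.inl hξ.ne')).mul hexp).mul
    hu.norm_sq).congr_deriv ?_
  simp only [Pi.mul_apply]
  ring

theorem rpow_mul_exp_mul_norm_sq_deriv_le (hμ : 0 < μ) (hξ : 0 < ξ) :
    ((β * ξ ^ (β - 1) - μ * ξ ^ β) * ‖u ξ‖ ^ 2 + ξ ^ β * (2 * inner ℝ (u ξ) v))
        * Real.exp (-μ * ξ) ≤
      β * (‖u ξ‖ ^ 2 * ξ ^ (β - 1) * Real.exp (-μ * ξ)) +
        μ⁻¹ * (‖v‖ ^ 2 * ξ ^ β * Real.exp (-μ * ξ)) := by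
  have hamgm : 2 * inner ℝ (u ξ) v ≤ μ * ‖u ξ‖ ^ 2 + μ⁻¹ * ‖v‖ ^ 2 := by
    have hsq : 0 ≤ μ⁻¹ * (μ * ‖u ξ‖ - ‖v‖) ^ 2 := by positivity
    have := real_inner_le_norm (u ξ) v
    have : μ⁻¹ * μ = 1 := inv_mul_cancel₀ hμ.ne'
    nlinarith
  have hp : 0 ≤ ξ ^ β * Real.exp (-μ * ξ) := by positivity
  nlinarith [mul_le_mul_of_nonneg_left hamgm hp]

theorem neg_le_rpow_mul_exp_mul_norm_sq_deriv (hβ : 0 ≤ β) (hμ : 0 ≤ μ) (hξ : 0 < ξ) (hξ1 : ξ ≤ 1) :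
    -((μ + 1) * (‖u ξ‖ ^ 2 * ξ ^ (β - 1) * Real.exp (-μ * ξ)) +
        ‖v‖ ^ 2 * ξ ^ β * Real.exp (-μ * ξ)) ≤
      ((β * ξ ^ (β - 1) - μ * ξ ^ β) * ‖u ξ‖ ^ 2 + ξ ^ β * (2 * inner ℝ (u ξ) v))
        * Real.exp (-μ * ξ) := by
  have hinner : -(‖u ξ‖ ^ 2 + ‖v‖ ^ 2) ≤ 2 * inner ℝ (u ξ) v := by
    nlinarith [neg_abs_le (inner ℝ (u ξ) v), abs_real_inner_le_norm (u ξ) v,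
      sq_nonneg (‖u ξ‖ - ‖v‖)]
  have hpq : ξ ^ β ≤ ξ ^ (β - 1) := Real.rpow_le_rpow_of_exponent_ge hξ hξ1 (by linarith)
  have hp : 0 ≤ ξ ^ β := by positivity
  have hq : 0 ≤ ξ ^ (β - 1) := by positivity
  have he : 0 < Real.exp (-μ * ξ) := Real.exp_pos _
  have hs : 0 ≤ ‖u ξ‖ ^ 2 := by positivity
  have hbracket : -((μ + 1) * ‖u ξ‖ ^ 2 * ξ ^ (β - 1) + ‖v‖ ^ 2 * ξ ^ β) ≤
      (β * ξ ^ (β - 1) - μ * ξ ^ β) * ‖u ξ‖ ^ 2 + ξ ^ β * (2 * inner ℝ (u ξ) v) := by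
    nlinarith [mul_le_mul_of_nonneg_left hinner hp, mul_nonneg (mul_nonneg hβ hq) hs,
      mul_le_mul_of_nonneg_right hpq (mul_nonneg (add_nonneg hμ zero_le_one) hs)]
  nlinarith [mul_le_mul_of_nonneg_right hbracket he.le]

end WeightedNormSq

theorem vanishing_trace (β μ : ℝ) (hβ : 0 < β) (hμ : 0 < μ)
    (u u' : ℝ → ℂ)
    (hderiv : ∀ ξ ∈ Ioi (0 : ℝ), HasDerivAt u (u' ξ) ξ)
    (hint' : IntegrableOn
      (fun ξ => ‖u' ξ‖ ^ 2 * ξ ^ β * Real.exp (-μ * ξ)) (Ioi 0))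
    (hint : IntegrableOn
      (fun ξ => ‖u ξ‖ ^ 2 * ξ ^ (β - 1) * Real.exp (-μ * ξ)) (Ioi 0)) :
    Tendsto (fun ξ => ξ ^ β * ‖u ξ‖ ^ 2)
        (nhdsWithin 0 (Ioi 0)) (nhds 0) ∧
      Tendsto (fun ξ => ξ ^ β * Real.exp (-μ * ξ) * ‖u ξ‖ ^ 2)
        atTop (nhds 0) := by
  set h := fun ξ => ξ ^ β * Real.exp (-μ * ξ) * ‖u ξ‖ ^ 2 with h_def
  have hh0 : ∀ ξ ∈ Ioi (0 : ℝ), 0 ≤ h ξ := fun ξ (hξ : 0 < ξ) => by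
    simp only [h_def]
    positivity
  have hdiv : IntegrableOn (fun ξ => h ξ / ξ) (Ioi 0) := by
    refine hint.congr_fun (fun ξ (hξ : 0 < ξ) => ?_) measurableSet_Ioi
    simp only [h_def, Real.rpow_sub_one hξ.ne']
    ring
  have hh' := fun ξ hξ => hasDerivAt_rpow_mul_exp_mul_norm_sq (β := β) (μ := μ) hξ (hderiv ξ hξ)
  have hzero : Tendsto h (𝓝[>] 0) (𝓝 0) :=
    tendsto_nhdsGT_zero_of_neg_le_hasDerivAt one_pos (fun ξ hξ => hh0 ξ hξ.1)
      (hdiv.mono_set Ioo_subset_Ioi_self) (fun ξ hξ => hh' ξ hξ.1)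
      (IntegrableOn.mono_set ((hint.const_mul (μ + 1)).add hint') Ioo_subset_Ioi_self)
      (fun ξ hξ => neg_le_rpow_mul_exp_mul_norm_sq_deriv hβ.le hμ.le hξ.1 hξ.2.le)
  have hinfty : Tendsto h atTop (𝓝 0) :=
    tendsto_atTop_zero_of_hasDerivAt_le hh0 hdiv hh'
      ((hint.const_mul β).add (hint'.const_mul μ⁻¹))
      fun ξ hξ => rpow_mul_exp_mul_norm_sq_deriv_le hμ hξ
  have hexp : Tendsto (fun ξ => Real.exp (μ * ξ)) (𝓝[>] 0) (𝓝 1) := by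
    simpa using ((continuous_const_mul μ).rexp.tendsto 0).mono_left nhdsWithin_le_nhds
  refine ⟨(by simpa using hzero.mul hexp : Tendsto (fun ξ => h ξ * Real.exp (μ * ξ)) _ _).congr
    fun ξ => ?_, hinfty⟩
  have hcancel : Real.exp (-μ * ξ) * Real.exp (μ * ξ) = 1 := by
    rw [← Real.exp_add]
    simp
  simp only [h_def]
  linear_combination (ξ ^ β * ‖u ξ‖ ^ 2) * hcancel
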